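/- Define h(τ) = θ_{(0,0)}(4τ)² · θ_{(0,1)}(4τ)² · θ_{(1,0)}(4τ)² for τ in the complex upper half plane. Then for every matrix [[a, b], [c, d]] ∈ SL₂(ℤ) with 16 ∣ c, one has h((aτ + b)/(cτ + d)) = χ_{−1}(d) · (cτ + d)³ · h(τ), where χ_{−1}(d) = 1 if d ≡ 1 (mod 4) and χ_{−1}(d) = −1 if d ≡ 3 (mod 4). In other words, h is a modular form of weight 3 for Γ₀(16) with nebentypus χ_{−1}. -/

import Mathlib

/-! The function `G(σ) = θ_{(0,0)}(σ)² θ_{(0,1)}(σ)² θ_{(1,0)}(σ)²` (which is `4η(σ)⁶`) satisfies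
`G(σ + 1) = i G(σ)` and, by Jacobi's functional equation, `G(-1/σ) = i σ³ G(σ)`. Since `S` and
`T` generate `SL₂(ℤ)`, `G` transforms under every `γ ∈ SL₂(ℤ)` in weight `3` with a multiplier
`i^e(γ)`, where `e(γ)` depends only on `γ mod 4`. Now `h(τ) = G(4τ)`, and conjugating by
`diag(4, 1)` sends `[[a, b], [c, d]] ∈ Γ₀(16)` to `[[a, 4b], [c/4, d]]`, whose off-diagonal entries
vanish mod `4`; there the multiplier is `χ_{-1}(d)`. -/

open Complex

/-- The genus-one theta constant
`θ_{(a,b)}(τ) = ∑_{n ∈ ℤ} exp(πiτ(n + a/2)² + πi(n + a/2)b)`. -/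
noncomputable def theta1 (a b : ℤ) (τ : ℂ) : ℂ :=
  ∑' n : ℤ, Complex.exp (Real.pi * I * τ * ((n : ℂ) + (a : ℂ) / 2) ^ 2 +
    Real.pi * I * ((n : ℂ) + (a : ℂ) / 2) * (b : ℂ))

/-- The modular form `h(τ) = θ_{(0,0)}(4τ)² θ_{(0,1)}(4τ)² θ_{(1,0)}(4τ)²`. -/
noncomputable def hForm (τ : ℂ) : ℂ :=
  theta1 0 0 (4 * τ) ^ 2 * theta1 0 1 (4 * τ) ^ 2 * theta1 1 0 (4 * τ) ^ 2

open ModularGroup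
open UpperHalfPlane hiding I
open scoped MatrixGroups

lemma theta1_zero_add_one (b : ℤ) (σ : ℂ) : theta1 0 b (σ + 1) = theta1 0 (b + 1) σ := by
  refine tsum_congr fun n ↦ exp_eq_exp_iff_exists_int.mpr ?_
  obtain ⟨k, hk⟩ := Int.even_mul_pred_self n
  have hk' : (n : ℂ) * (n - 1) = k + k := by exact_mod_cast hk
  refine ⟨k, ?_⟩
  push_cast
  linear_combination (Real.pi * I : ℂ) * hk'

lemma theta1_zero_char_add_two (b : ℤ) (σ : ℂ) : theta1 0 (b + 2) σ = theta1 0 b σ := by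
  refine tsum_congr fun n ↦ exp_eq_exp_iff_exists_int.mpr ⟨n, ?_⟩
  push_cast
  ring

lemma theta1_one_add_one (b : ℤ) (σ : ℂ) :
    theta1 1 b (σ + 1) = cexp (Real.pi * I / 4) * theta1 1 b σ := by
  rw [theta1, theta1, ← tsum_mul_left]
  refine tsum_congr fun n ↦ ?_
  rw [← Complex.exp_add]
  refine exp_eq_exp_iff_exists_int.mpr ?_
  obtain ⟨k, hk⟩ := Int.even_mul_succ_self n
  have hk' : (n : ℂ) * (n + 1) = k + k := by exact_mod_cast hk
  refine ⟨k, ?_⟩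
  push_cast
  linear_combination (Real.pi * I : ℂ) * hk'

lemma theta1_zero_zero_eq_jacobiTheta₂ (σ : ℂ) : theta1 0 0 σ = jacobiTheta₂ 0 σ :=
  tsum_congr fun n ↦ by rw [jacobiTheta₂_term]; push_cast; ring_nf

lemma theta1_zero_one_eq_jacobiTheta₂ (σ : ℂ) : theta1 0 1 σ = jacobiTheta₂ (1 / 2) σ :=
  tsum_congr fun n ↦ by rw [jacobiTheta₂_term]; push_cast; ring_nf

lemma theta1_one_zero_eq_jacobiTheta₂ (σ : ℂ) :
    theta1 1 0 σ = cexp (Real.pi * I * σ / 4) * jacobiTheta₂ (σ / 2) σ := by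
  rw [theta1, jacobiTheta₂, ← tsum_mul_left]
  refine tsum_congr fun n ↦ ?_
  rw [jacobiTheta₂_term, ← Complex.exp_add]
  congr 1
  push_cast
  ring

lemma theta1_zero_zero_neg_inv (σ : ℂ) :
    theta1 0 0 σ = 1 / (-I * σ) ^ (1 / 2 : ℂ) * theta1 0 0 (-1 / σ) := by
  rw [theta1_zero_zero_eq_jacobiTheta₂, theta1_zero_zero_eq_jacobiTheta₂,
    jacobiTheta₂_functional_equation]
  simp

lemma theta1_zero_one_neg_inv (σ : ℂ) :
    theta1 0 1 σ = 1 / (-I * σ) ^ (1 / 2 : ℂ) * theta1 1 0 (-1 / σ) := by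
  rw [theta1_zero_one_eq_jacobiTheta₂, theta1_one_zero_eq_jacobiTheta₂,
    jacobiTheta₂_functional_equation, show -1 / σ / 2 = -(1 / 2 / σ) by ring,
    jacobiTheta₂_neg_left, show -Real.pi * I * (1 / 2) ^ 2 / σ = Real.pi * I * (-1 / σ) / 4 by ring]
  ring

lemma theta1_one_zero_neg_inv {σ : ℂ} (hσ : σ ≠ 0) :
    theta1 1 0 σ = 1 / (-I * σ) ^ (1 / 2 : ℂ) * theta1 0 1 (-1 / σ) := by
  have hexp : cexp (Real.pi * I * σ / 4) * cexp (-Real.pi * I * (σ / 2) ^ 2 / σ) = 1 := by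
    rw [← Complex.exp_add, ← Complex.exp_zero]
    congr 1
    field_simp
    ring
  rw [theta1_one_zero_eq_jacobiTheta₂, theta1_zero_one_eq_jacobiTheta₂,
    jacobiTheta₂_functional_equation, show σ / 2 / σ = 1 / 2 by field_simp]
  linear_combination (1 / (-I * σ) ^ (1 / 2 : ℂ) * jacobiTheta₂ (1 / 2) (-1 / σ)) * hexp

noncomputable def thetaSqProd (σ : ℂ) : ℂ :=
  theta1 0 0 σ ^ 2 * theta1 0 1 σ ^ 2 * theta1 1 0 σ ^ 2

lemma hForm_eq_thetaSqProd (τ : ℂ) : hForm τ = thetaSqProd (4 * τ) := rfl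

lemma thetaSqProd_add_one (σ : ℂ) : thetaSqProd (σ + 1) = I * thetaSqProd σ := by
  have h : cexp (Real.pi * I / 4) ^ 2 = I := by
    rw [← Complex.exp_nat_mul]
    refine (congrArg cexp ?_).trans exp_pi_div_two_mul_I
    push_cast
    ring
  rw [thetaSqProd, thetaSqProd, theta1_zero_add_one, theta1_zero_add_one, zero_add,
    show (1 + 1 : ℤ) = 0 + 2 from rfl, theta1_zero_char_add_two, theta1_one_add_one, mul_pow, h]
  ring

lemma thetaSqProd_neg_inv {σ : ℂ} (hσ : σ ≠ 0) :
    thetaSqProd (-1 / σ) = I * σ ^ 3 * thetaSqProd σ := by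
  have hr : ((-I * σ) ^ (1 / 2 : ℂ)) ^ 2 = -I * σ := by
    rw [one_div]; exact cpow_ofNat_inv_pow _ 2
  set r := (-I * σ) ^ (1 / 2 : ℂ)
  have hr0 : r ≠ 0 := by
    rintro h
    simp [h, hσ, I_ne_zero, eq_comm] at hr
  have hσ' : thetaSqProd σ = (1 / r) ^ 6 * thetaSqProd (-1 / σ) := by
    rw [thetaSqProd, thetaSqProd, theta1_zero_zero_neg_inv σ, theta1_zero_one_neg_inv σ,
      theta1_one_zero_neg_inv hσ]
    ring
  calc thetaSqProd (-1 / σ) = (r ^ 2) ^ 3 * ((1 / r) ^ 6 * thetaSqProd (-1 / σ)) := by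
        field_simp
    _ = I * σ ^ 3 * thetaSqProd σ := by
        rw [← hσ', hr]
        linear_combination (-I * σ ^ 3 * thetaSqProd σ) * I_sq

/-- The exponent `e(γ)` of the multiplier `i^e(γ)` of `thetaSqProd`, as a function of the entries
of `γ` mod `4`: the unique function on `SL₂(ℤ/4)` vanishing at `1` that increases by `1` under left
multiplication by `T` and by `S`. -/
def multiplierExp (a b c d : ZMod 4) : ZMod 4 :=
  a * b + c * d + 2 * a * c + a * d - a ^ 2 * d - b * c ^ 2

lemma multiplierExp_T : ∀ a b c d : ZMod 4, a * d - b * c = 1 →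
    multiplierExp (a + c) (b + d) c d = multiplierExp a b c d + 1 := by
  decide

lemma multiplierExp_S : ∀ a b c d : ZMod 4, a * d - b * c = 1 →
    multiplierExp (-c) (-d) a b = multiplierExp a b c d + 1 := by
  decide

lemma multiplierExp_diagonal : ∀ a d : ZMod 4, a * d = 1 →
    multiplierExp a 0 0 d = if d = 1 then 0 else 2 := by
  decide

noncomputable def multiplier (γ : SL(2, ℤ)) : ℂ :=
  I ^ (multiplierExp (γ 0 0) (γ 0 1) (γ 1 0) (γ 1 1)).val

lemma I_pow_val_add_one (x : ZMod 4) : I ^ (x + 1).val = I * I ^ x.val := by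
  rw [ZMod.val_add, ← pow_eq_pow_mod _ I_pow_four, pow_add, mul_comm,
    show (1 : ZMod 4).val = 1 from rfl, pow_one]

lemma det_intCast_zmod (γ : SL(2, ℤ)) (n : ℕ) :
    (γ 0 0 : ZMod n) * γ 1 1 - γ 0 1 * γ 1 0 = 1 := by
  have h := congrArg (Int.cast : ℤ → ZMod n) (Matrix.SpecialLinearGroup.det_coe γ)
  rw [Matrix.det_fin_two] at h
  push_cast at h
  exact h

lemma multiplier_T_mul (γ : SL(2, ℤ)) : multiplier (T * γ) = I * multiplier γ := by
  rw [multiplier, multiplier, ← I_pow_val_add_one,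
    ← multiplierExp_T _ _ _ _ (det_intCast_zmod γ 4)]
  simp [Matrix.mul_apply, Fin.sum_univ_two]

lemma multiplier_S_mul (γ : SL(2, ℤ)) : multiplier (S * γ) = I * multiplier γ := by
  rw [multiplier, multiplier, ← I_pow_val_add_one,
    ← multiplierExp_S _ _ _ _ (det_intCast_zmod γ 4)]
  simp [Matrix.mul_apply, Fin.sum_univ_two]

lemma multiplier_of_four_dvd (γ : SL(2, ℤ)) (hb : (4 : ℤ) ∣ γ 0 1) (hc : (4 : ℤ) ∣ γ 1 0) :
    multiplier γ = if γ 1 1 % 4 = 1 then 1 else -1 := by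
  have hb' : (γ 0 1 : ZMod 4) = 0 := (ZMod.intCast_zmod_eq_zero_iff_dvd _ 4).mpr hb
  have hc' : (γ 1 0 : ZMod 4) = 0 := (ZMod.intCast_zmod_eq_zero_iff_dvd _ 4).mpr hc
  have had : (γ 0 0 : ZMod 4) * γ 1 1 = 1 := by simpa [hb', hc'] using det_intCast_zmod γ 4
  have hd : ∀ d : ℤ, (d : ZMod 4) = 1 ↔ d % 4 = 1 := fun d ↦ by
    simpa using ZMod.intCast_eq_intCast_iff' d 1 4
  rw [multiplier, hb', hc', multiplierExp_diagonal _ _ had]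
  simp only [hd]
  split_ifs
  exacts [pow_zero I, I_sq]

lemma denom_T_mul (γ : SL(2, ℤ)) (τ : ℍ) : denom (T * γ : SL(2, ℤ)) τ = denom γ τ := by
  rw [denom_apply, denom_apply, T_mul_apply_one]

lemma denom_S_mul (γ : SL(2, ℤ)) (τ : ℍ) :
    denom (S * γ : SL(2, ℤ)) τ = (γ • τ : ℍ) * denom γ τ := by
  have hτ := denom_ne_zero γ τ
  rw [denom_apply] at hτ
  rw [coe_specialLinearGroup_apply, denom_apply, denom_apply]
  simp [Matrix.mul_apply, Fin.sum_univ_two, div_mul_cancel₀ _ hτ]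

def TransformationLaw (γ : SL(2, ℤ)) : Prop :=
  ∀ τ : ℍ, thetaSqProd ((γ • τ : ℍ) : ℂ) = multiplier γ * denom γ τ ^ 3 * thetaSqProd τ

lemma transformationLaw_T_mul_iff (γ : SL(2, ℤ)) :
    TransformationLaw (T * γ) ↔ TransformationLaw γ := by
  refine forall_congr' fun τ ↦ ?_
  rw [mul_smul, modular_T_smul, coe_vadd, add_comm, ofReal_one, thetaSqProd_add_one,
    multiplier_T_mul, denom_T_mul, mul_assoc I, mul_assoc I]
  exact mul_right_inj' I_ne_zero

lemma transformationLaw_S_mul_iff (γ : SL(2, ℤ)) :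
    TransformationLaw (S * γ) ↔ TransformationLaw γ := by
  refine forall_congr' fun τ ↦ ?_
  have hw : ((γ • τ : ℍ) : ℂ) ≠ 0 := (γ • τ).ne_zero
  rw [mul_smul, modular_S_smul, coe_mk, inv_neg, ← one_div, ← neg_div, thetaSqProd_neg_inv hw,
    multiplier_S_mul, denom_S_mul, show I * multiplier γ * ((γ • τ : ℍ) * denom γ τ) ^ 3 *
      thetaSqProd τ = I * ((γ • τ : ℍ) : ℂ) ^ 3 * (multiplier γ * denom γ τ ^ 3 * thetaSqProd τ)
      by ring]
  exact mul_right_inj' (mul_ne_zero I_ne_zero (pow_ne_zero 3 hw))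

lemma transformationLaw (γ : SL(2, ℤ)) : TransformationLaw γ := by
  have hγ : γ ∈ Subgroup.closure {S, T} := by
    simp [SpecialLinearGroup.SL2Z_generators]
  induction hγ using Subgroup.closure_induction_left with
  | one => intro τ; simp [multiplier, multiplierExp]
  | mul_left x hx y _ hy =>
    rcases hx with rfl | rfl
    exacts [(transformationLaw_S_mul_iff y).mpr hy, (transformationLaw_T_mul_iff y).mpr hy]
  | inv_mul_cancel x hx y _ hy =>
    rcases hx with rfl | rfl
    · rwa [← transformationLaw_S_mul_iff, mul_inv_cancel_left]
    · rwa [← transformationLaw_T_mul_iff, mul_inv_cancel_left]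

/-- `h` is a modular form of weight `3` for `Γ₀(16)` with nebentypus `χ_{-1}`: for every
`[[a, b], [c, d]] ∈ SL₂(ℤ)` with `16 ∣ c` and every `τ` in the upper half plane,
`h((aτ + b)/(cτ + d)) = χ_{-1}(d) (cτ + d)³ h(τ)`, where `χ_{-1}(d) = 1` if `d ≡ 1 (mod 4)`
and `χ_{-1}(d) = -1` if `d ≡ 3 (mod 4)`. -/
theorem hForm_modular (a b c d : ℤ) (hdet : a * d - b * c = 1) (hc : (16 : ℤ) ∣ c)
    (τ : ℂ) (hτ : 0 < τ.im) :
    hForm (((a : ℂ) * τ + (b : ℂ)) / ((c : ℂ) * τ + (d : ℂ))) =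
      (if d % 4 = 1 then (1 : ℂ) else -1) * ((c : ℂ) * τ + (d : ℂ)) ^ 3 * hForm τ := by
  obtain ⟨e, rfl⟩ := hc
  let γ : SL(2, ℤ) := ⟨!![a, 4 * b; 4 * e, d], by
    rw [Matrix.det_fin_two_of]; linear_combination hdet⟩
  let τ' : ℍ := ⟨4 * τ, by simpa using hτ⟩
  have hγτ : ((γ • τ' : ℍ) : ℂ) = 4 * ((a * τ + b) / ((16 * e : ℤ) * τ + d)) := by
    rw [coe_specialLinearGroup_apply]
    simp only [γ, τ', algebraMap_int_eq, eq_intCast, ofReal_intCast, Matrix.of_apply,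
      Matrix.cons_val', Matrix.cons_val_zero, Matrix.cons_val_one, Matrix.cons_val_fin_one]
    push_cast
    ring
  have hdenom : denom γ τ' = (16 * e : ℤ) * τ + d := by
    rw [denom_apply]
    simp only [γ, τ', Matrix.of_apply, Matrix.cons_val', Matrix.cons_val_zero,
      Matrix.cons_val_one, Matrix.cons_val_fin_one]
    push_cast
    ring
  have hmult : multiplier γ = if d % 4 = 1 then 1 else -1 :=
    multiplier_of_four_dvd γ (by simp [γ]) ⟨e, by simp [γ]⟩
  have h := transformationLaw γ τ'
  rw [hγτ, hmult, hdenom] at h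
  rwa [hForm_eq_thetaSqProd, hForm_eq_thetaSqProd]
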